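/- Lemma 5.1 (first forbidden gap): for every β ≥ 0 and every u with 0 ≤ u < (1 + β/4)^{−1}, one has g(u,β) > 0; in particular, the equation g(u,β) = 0 has no roots in the interval [0, (1 + β/4)^{−1}). -/

import Mathlib

/-- The function `g(u,β)` whose roots `u ∈ (0,1)` determine the spectral singularities of the
PT-symmetric waveguide with gain-and-loss amplitude `γ = β²/2`. (Note that for `u = 0` the
formula evaluates to `1`, the limit value as `u → 0⁺`, since in Lean `β/0 = 0`.) -/
noncomputable def g (u β : ℝ) : ℝ :=
  u^4 * (1 - u^4) * Real.cosh (β * u) * Real.cos (β / u)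
    - 2 * u^6 * Real.sinh (β * u) * Real.sin (β / u) + 1 - u^12

/-!
Write `a = βu`, `b = β/u`; the hypothesis on `u` says exactly `βu < 4(1 - u)`.
The hyperbolic factors are controlled by `u ≤ e^{u-1}`, i.e. `u⁴ e^{4(1-u)} ≤ 1`, which turns
`u⁴ cosh a` and `u⁴ sinh a` into polynomial expressions in `u`.
For `u ≤ 4/5` the oscillating part of `g` is bounded below by `-u⁴(1+u⁴) cosh a`
(Cauchy–Schwarz in `(cos b, sin b)`), which `1 - u¹²` beats.
For `u ≥ 4/5` one has `b = a/u² ≤ 5/4 < π/2`, so the cosine term is nonnegative, and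
`sin b ≤ b` reduces the sine term to `2u⁴ a sinh a < 1 - u¹²`.
-/

open Real

lemma neg_le_mul_cos_sub_mul_sin {p q r : ℝ} (hr : 0 ≤ r) (h : p ^ 2 + q ^ 2 ≤ r ^ 2) (b : ℝ) :
    -r ≤ p * cos b - q * sin b := by
  have hsq : (p * cos b - q * sin b) ^ 2 ≤ r ^ 2 := by
    nlinarith [sin_sq_add_cos_sq b, sq_nonneg (p * sin b + q * cos b)]
  exact (abs_le_of_sq_le_sq' hsq hr).1

lemma pow_mul_exp_nat_mul_one_sub_le_one (n : ℕ) {u : ℝ} (hu : 0 ≤ u) :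
    u ^ n * exp (n * (1 - u)) ≤ 1 := by
  have h : u * exp (1 - u) ≤ 1 :=
    calc u * exp (1 - u) ≤ exp (u - 1) * exp (1 - u) := by
          gcongr; linarith [add_one_le_exp (u - 1)]
      _ = 1 := by rw [← exp_add]; simp
  rw [exp_nat_mul, ← mul_pow]
  exact pow_le_one₀ (by positivity) h

lemma two_mul_pow_mul_cosh_le (n : ℕ) {u : ℝ} (hu : 0 ≤ u) :
    2 * u ^ n * cosh (n * (1 - u)) ≤ 1 + u ^ n * exp (-(n * (1 - u))) := by
  rw [cosh_eq]
  linarith [pow_mul_exp_nat_mul_one_sub_le_one n hu]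

lemma two_mul_pow_mul_sinh_le (n : ℕ) {u : ℝ} (hu : 0 ≤ u) :
    2 * u ^ n * sinh (n * (1 - u)) ≤ 1 - u ^ n * exp (-(n * (1 - u))) := by
  rw [sinh_eq]
  linarith [pow_mul_exp_nat_mul_one_sub_le_one n hu]

lemma pow_four_mul_cosh_lt_one_sub_pow_twelve {u a : ℝ} (hu0 : 0 ≤ u) (hu : u ≤ 4 / 5)
    (ha : |a| ≤ 4 * (1 - u)) : u ^ 4 * (1 + u ^ 4) * cosh a < 1 - u ^ 12 := by
  set E := exp (-(4 * (1 - u)))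
  have h5 : 0 < 5 - 4 * u := by linarith
  have hcosh : 2 * u ^ 4 * cosh a ≤ 1 + u ^ 4 * E := by
    have hmono : cosh a ≤ cosh (4 * (1 - u)) := by
      rwa [cosh_le_cosh, abs_of_nonneg (by linarith : 0 ≤ 4 * (1 - u))]
    have := two_mul_pow_mul_cosh_le 4 hu0
    push_cast at this
    nlinarith [pow_nonneg hu0 4]
  have hE : E * (5 - 4 * u) ≤ 1 :=
    calc E * (5 - 4 * u) ≤ E * exp (4 * (1 - u)) := by
          gcongr; linarith [add_one_le_exp (4 * (1 - u))]
      _ = 1 := by rw [← exp_add]; simp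
  have hpoly : (1 + u ^ 4) * (5 - 4 * u + u ^ 4) < 2 * (1 - u ^ 12) * (5 - 4 * u) := by
    have h4 : u ^ 4 ≤ (4 / 5) ^ 4 := pow_le_pow_left₀ hu0 hu 4
    have h8 : u ^ 8 ≤ (4 / 5) ^ 8 := pow_le_pow_left₀ hu0 hu 8
    have h12 : u ^ 12 ≤ (4 / 5) ^ 12 := pow_le_pow_left₀ hu0 hu 12
    have : 9 / 5 * (1 - (4 / 5) ^ 4 - 2 * (4 / 5) ^ 12) ≤ (5 - 4 * u) * (1 - u ^ 4 - 2 * u ^ 12) :=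
      mul_le_mul (by linarith) (by linarith) (by norm_num) h5.le
    nlinarith
  have hbound : 2 * (u ^ 4 * (1 + u ^ 4) * cosh a) * (5 - 4 * u)
      ≤ (1 + u ^ 4) * (5 - 4 * u + u ^ 4) :=
    calc 2 * (u ^ 4 * (1 + u ^ 4) * cosh a) * (5 - 4 * u)
        = (1 + u ^ 4) * (2 * u ^ 4 * cosh a * (5 - 4 * u)) := by ring
      _ ≤ (1 + u ^ 4) * ((1 + u ^ 4 * E) * (5 - 4 * u)) := by gcongr
      _ = (1 + u ^ 4) * (5 - 4 * u + u ^ 4 * (E * (5 - 4 * u))) := by ring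
      _ ≤ (1 + u ^ 4) * (5 - 4 * u + u ^ 4 * 1) := by gcongr
      _ = (1 + u ^ 4) * (5 - 4 * u + u ^ 4) := by ring
  nlinarith

lemma two_mul_pow_four_mul_sinh_lt_one_sub_pow_twelve {u a : ℝ} (hu : 4 / 5 ≤ u) (hu1 : u < 1)
    (ha0 : 0 ≤ a) (ha : a ≤ 4 * (1 - u)) : 2 * u ^ 4 * (a * sinh a) < 1 - u ^ 12 := by
  have hu0 : 0 ≤ u := by linarith
  have hsinh : 2 * u ^ 4 * sinh (4 * (1 - u)) ≤ 1 - u ^ 4 * (4 * u - 3) := by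
    have := two_mul_pow_mul_sinh_le 4 hu0
    push_cast at this
    nlinarith [add_one_le_exp (-(4 * (1 - u))), pow_nonneg hu0 4]
  have hpoly : 4 * (1 - u) * (1 - u ^ 4 * (4 * u - 3)) < 1 - u ^ 12 := by
    have hp : ∀ k : ℕ, 0 ≤ (1 - u) * (u ^ k - (4 / 5) ^ k) := fun k =>
      mul_nonneg (by linarith) (sub_nonneg.2 (pow_le_pow_left₀ (by norm_num) hu k))
    nlinarith [hp 1, hp 2, hp 3, hp 4, hp 5, hp 6, hp 7, hp 8, hp 9, hp 10, hp 11]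
  calc 2 * u ^ 4 * (a * sinh a) ≤ 2 * u ^ 4 * (4 * (1 - u) * sinh (4 * (1 - u))) := by
        gcongr
        exact sinh_le_sinh.2 ha
    _ = 4 * (1 - u) * (2 * u ^ 4 * sinh (4 * (1 - u))) := by ring
    _ ≤ 4 * (1 - u) * (1 - u ^ 4 * (4 * u - 3)) := by gcongr
    _ < 1 - u ^ 12 := hpoly

lemma one_sub_pow_twelve_sub_le_g (u β : ℝ) :
    1 - u ^ 12 - u ^ 4 * (1 + u ^ 4) * cosh (β * u) ≤ g u β := by
  have hnorm : (u ^ 4 * (1 - u ^ 4) * cosh (β * u)) ^ 2 + (2 * u ^ 6 * sinh (β * u)) ^ 2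
      ≤ (u ^ 4 * (1 + u ^ 4) * cosh (β * u)) ^ 2 := by
    nlinarith [cosh_sq (β * u), pow_nonneg (sq_nonneg u) 6]
  have := neg_le_mul_cos_sub_mul_sin (by positivity) hnorm (β / u)
  unfold g
  linarith

lemma g_pos_of_le_four_fifths {u β : ℝ} (hu0 : 0 ≤ u) (hu : u ≤ 4 / 5)
    (hβu : |β * u| ≤ 4 * (1 - u)) : 0 < g u β := by
  linarith [one_sub_pow_twelve_sub_le_g u β, pow_four_mul_cosh_lt_one_sub_pow_twelve hu0 hu hβu]

lemma g_pos_of_four_fifths_le {u β : ℝ} (hβ : 0 ≤ β) (hu : 4 / 5 ≤ u) (hu1 : u < 1)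
    (hβu : β * u ≤ 4 * (1 - u)) : 0 < g u β := by
  have hu0 : 0 < u := by linarith
  have hb0 : 0 ≤ β / u := by positivity
  have hab : β / u * u ^ 2 = β * u := by field_simp
  have hb : β / u ≤ 5 / 4 := by
    have hu2 : (4 / 5) ^ 2 ≤ u ^ 2 := pow_le_pow_left₀ (by norm_num) hu 2
    nlinarith [mul_le_mul_of_nonneg_left hu2 hb0]
  have hcos : 0 ≤ cos (β / u) :=
    cos_nonneg_of_mem_Icc ⟨by linarith [pi_pos], by linarith [pi_gt_three]⟩
  have hsinh : 0 ≤ sinh (β * u) := sinh_nonneg_iff.2 (by positivity)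
  have hcos_term : 0 ≤ u ^ 4 * (1 - u ^ 4) * cosh (β * u) * cos (β / u) := by
    have := sub_nonneg.2 (pow_le_one₀ hu0.le hu1.le : u ^ 4 ≤ 1)
    positivity
  have hsin_term : 2 * u ^ 6 * sinh (β * u) * sin (β / u) ≤ 2 * u ^ 4 * (β * u * sinh (β * u)) :=
    calc 2 * u ^ 6 * sinh (β * u) * sin (β / u) ≤ 2 * u ^ 6 * sinh (β * u) * (β / u) := by
          gcongr; exact sin_le hb0
      _ = 2 * u ^ 4 * (β * u * sinh (β * u)) := by rw [← hab]; ring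
  have := two_mul_pow_four_mul_sinh_lt_one_sub_pow_twelve hu hu1 (by positivity) hβu
  unfold g
  linarith

theorem stmt_17 (β : ℝ) (hβ : 0 ≤ β) (u : ℝ) (hu0 : 0 ≤ u) (hu : u < (1 + β/4)⁻¹) :
    0 < g u β := by
  have hβu : β * u < 4 * (1 - u) := by
    have h4 : 0 < 1 + β / 4 := by linarith
    have := (lt_inv_mul_iff₀ h4).1 (by rwa [mul_one])
    linarith
  rcases le_or_gt u (4 / 5) with h | h
  · exact g_pos_of_le_four_fifths hu0 h (by rw [abs_of_nonneg (by positivity)]; exact hβu.le)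
  · exact g_pos_of_four_fifths_le hβ h.le (by nlinarith) hβu.le
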